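/- arXiv:2507.20694 — 3 statements merged into one kernel-verified Lean document; each statement's English description precedes it below -/
import Mathlib

section
/- Two copies of the two-qubit gate XX(α) acting on overlapping qubit pairs (1,2) and (2,3) of a three-qubit register commute: (XX(α) ⊗ I₂)·(I₂ ⊗ XX(β)) = (I₂ ⊗ XX(β))·(XX(α) ⊗ I₂). -/
open Matrix
open scoped Kronecker

noncomputable section

def PX : Matrix (Fin 2) (Fin 2) ℂ := !![0, 1; 1, 0]

def XXg (α : ℝ) : Matrix (Fin 2 × Fin 2) (Fin 2 × Fin 2) ℂ :=
  NormedSpace.exp (((-(α / 2) : ℝ) • Complex.I) • (PX ⊗ₖ PX))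

def I₂ : Matrix (Fin 2) (Fin 2) ℂ := 1

/-- Reassociate an `8×8` matrix indexed by `Fin 2 × (Fin 2 × Fin 2)` to one indexed by
`(Fin 2 × Fin 2) × Fin 2`. -/
def assoc8 (M : Matrix (Fin 2 × (Fin 2 × Fin 2)) (Fin 2 × (Fin 2 × Fin 2)) ℂ) :
    Matrix ((Fin 2 × Fin 2) × Fin 2) ((Fin 2 × Fin 2) × Fin 2) ℂ :=
  Matrix.reindex (Equiv.prodAssoc (Fin 2) (Fin 2) (Fin 2)).symm
    (Equiv.prodAssoc (Fin 2) (Fin 2) (Fin 2)).symm M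

/-! `XX(α) = exp (-(α/2) i X⊗X)`, and `· ⊗ₖ 1`, `1 ⊗ₖ ·` and reassociation are algebra
homomorphisms, which commute with the matrix exponential. So the two gates are exponentials of
multiples of `X⊗X⊗1` and `1⊗X⊗X`. These commute because on the shared qubit both act by `X`, and
exponentials of commuting matrices commute. -/

namespace Matrix

variable {𝕂 m n : Type*} [RCLike 𝕂] [Fintype m] [DecidableEq m] [Fintype n] [DecidableEq n]

theorem map_exp (f : Matrix m m 𝕂 →ₐ[𝕂] Matrix n n 𝕂) (A : Matrix m m 𝕂) :
    f (NormedSpace.exp A) = NormedSpace.exp (f A) :=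
  open scoped Matrix.Norms.Operator in
  NormedSpace.map_exp f f.toLinearMap.continuous_of_finiteDimensional A

theorem exp_kronecker_one (A : Matrix m m 𝕂) :
    NormedSpace.exp A ⊗ₖ (1 : Matrix n n 𝕂) = NormedSpace.exp (A ⊗ₖ (1 : Matrix n n 𝕂)) := by
  simpa using
    map_exp ((kroneckerAlgEquiv m n 𝕂).toAlgHom.comp Algebra.TensorProduct.includeLeft) A

theorem one_kronecker_exp (A : Matrix n n 𝕂) :
    (1 : Matrix m m 𝕂) ⊗ₖ NormedSpace.exp A = NormedSpace.exp ((1 : Matrix m m 𝕂) ⊗ₖ A) := by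
  simpa using
    map_exp ((kroneckerAlgEquiv m n 𝕂).toAlgHom.comp Algebra.TensorProduct.includeRight) A

end Matrix

theorem Commute.kronecker_overlap {R l m n : Type*} [CommSemiring R] [Fintype l]
    [DecidableEq l] [Fintype m] [Fintype n] [DecidableEq n] {B C : Matrix m m R} (h : Commute B C)
    (A : Matrix l l R) (D : Matrix n n R) :
    Commute (A ⊗ₖ B ⊗ₖ (1 : Matrix n n R)) ((1 : Matrix l l R) ⊗ₖ C ⊗ₖ D) := by
  simp only [Commute, SemiconjBy, ← mul_kronecker_mul, mul_one, one_mul, h.eq]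

theorem assoc8_kronecker (A B C : Matrix (Fin 2) (Fin 2) ℂ) :
    assoc8 (A ⊗ₖ (B ⊗ₖ C)) = A ⊗ₖ B ⊗ₖ C := by
  rw [← kronecker_assoc, assoc8, ← reindex_symm, Equiv.symm_apply_apply]

theorem assoc8_exp (A : Matrix (Fin 2 × (Fin 2 × Fin 2)) (Fin 2 × (Fin 2 × Fin 2)) ℂ) :
    assoc8 (NormedSpace.exp A) = NormedSpace.exp (assoc8 A) :=
  map_exp (reindexAlgEquiv ℂ ℂ _).toAlgHom A

theorem XX_overlapping_commute (α β : ℝ) :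
    (XXg α ⊗ₖ I₂) * assoc8 (I₂ ⊗ₖ XXg β) = assoc8 (I₂ ⊗ₖ XXg β) * (XXg α ⊗ₖ I₂) := by
  have hα : XXg α ⊗ₖ I₂ =
      NormedSpace.exp (((-(α / 2) : ℝ) • Complex.I) • (PX ⊗ₖ PX ⊗ₖ I₂)) := by
    rw [XXg, I₂, exp_kronecker_one, smul_kronecker]
  have hβ : assoc8 (I₂ ⊗ₖ XXg β) =
      NormedSpace.exp (((-(β / 2) : ℝ) • Complex.I) • (I₂ ⊗ₖ PX ⊗ₖ PX)) := by
    rw [XXg, I₂, one_kronecker_exp, assoc8_exp, kronecker_smul, ← assoc8_kronecker]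
    rfl -- `assoc8` is a reindexing, so it commutes with scalars definitionally
  rw [hα, hβ]
  exact (((Commute.refl PX).kronecker_overlap PX PX).smul_left _ |>.smul_right _).exp

end
end

section
/- Let G be an n×n matrix over ZMod 2 with all diagonal entries equal to 1, such that whenever G i j = 1 for some i ≠ j, every off-diagonal entry of row j is 0. Then G is invertible. -/
open Matrix

theorem commuting_cnot_layer_matrix_invertible {n : ℕ}
    (G : Matrix (Fin n) (Fin n) (ZMod 2))
    (hdiag : ∀ i, G i i = 1)
    (hrow : ∀ i j, i ≠ j → G i j = 1 → ∀ k, k ≠ j → G j k = 0) :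
    IsUnit G := by
  have hGG : G * G = 1 := by
    ext i k
    rw [Matrix.mul_apply, Matrix.one_apply]
    -- helper: if j ≠ i and k ≠ j then G i j * G j k = 0
    have key : ∀ j, j ≠ i → k ≠ j → G i j * G j k = 0 := by
      intro j hji hkj
      rcases eq_or_ne (G i j) 1 with h1 | h1
      · rw [hrow i j (Ne.symm hji) h1 k hkj, mul_zero]
      · have h0 : ∀ x : ZMod 2, x ≠ 1 → x = 0 := by decide
        rw [h0 _ h1, zero_mul]
    by_cases hik : i = k
    · subst hik
      rw [Finset.sum_eq_single i (fun j _ hji => key j hji (Ne.symm hji))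
        (by simp), hdiag, one_mul, if_pos rfl]
    · rw [if_neg hik]
      have hsub : ({i, k} : Finset (Fin n)) ⊆ Finset.univ := Finset.subset_univ _
      have hzero : ∀ j ∈ Finset.univ, j ∉ ({i, k} : Finset (Fin n)) →
          G i j * G j k = 0 := by
        intro j _ hj
        simp only [Finset.mem_insert, Finset.mem_singleton, not_or] at hj
        exact key j hj.1 (fun h => hj.2 h.symm)
      rw [← Finset.sum_subset hsub hzero, Finset.sum_pair hik,
        hdiag, one_mul, hdiag, mul_one]
      ring_nf
      simp [CharTwo.add_self_eq_zero]
      right; decide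
  exact ⟨⟨G, G, hGG, hGG⟩, rfl⟩
end

section
/- Let S be a finite family of elementary matrices B_{i₁,j₁},...,B_{i_k,j_k} over ZMod 2 that pairwise commute and are pairwise distinct, such that the index pairs satisfy: no index appears both as a first index and as a second index of (possibly different) pairs. Then the product G = B_{i_k,j_k}···B_{i₁,j₁} satisfies: all diagonal entries of G are 1, and whenever an off-diagonal entry G i j = 1 then all off-diagonal entries of row j of G are 0. -/
open Matrix

/-- The elementary matrix over `ZMod 2`: the identity with an extra `1` at `(i, j)`. -/
def B {n : ℕ} (i j : Fin n) : Matrix (Fin n) (Fin n) (ZMod 2) :=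
  1 + Matrix.single i j 1

/-!
Since no target index is a control index, `E_{ij} * E_{kl} = 0` for any two pairs of the list, so
the product of the `1 + E_{ij}` collapses to `1 + N`, where `N i j` is the number of occurrences of
`(i, j)` in the list. The diagonal of `N` vanishes because no pair is `(i, i)`; and if `G i j = 1`
with `i ≠ j`, then `(i, j)` occurs, so `j` is a target index, hence no `(j, k)` occurs and row `j`
of `N` is zero.
-/

theorem List.prod_map_one_add_of_mul_eq_zero {R : Type*} [Semiring R] (l : List R)
    (h : ∀ a ∈ l, ∀ b ∈ l, a * b = 0) : (l.map (1 + ·)).prod = 1 + l.sum := by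
  induction l with
  | nil => simp
  | cons a l ih =>
    have hal : a * l.sum = 0 := by
      rw [← List.map_id l, ← List.sum_map_mul_left]
      exact List.sum_eq_zero fun x hx => by
        obtain ⟨b, hb, rfl⟩ := List.mem_map.1 hx
        exact h a (by simp) b (by simp [hb])
    rw [List.map_cons, List.prod_cons, List.sum_cons,
      ih fun x hx y hy => h x (by simp [hx]) y (by simp [hy]),
      add_mul, one_mul, mul_add, mul_one, hal]
    abel

namespace Matrix

variable {m R : Type*} [DecidableEq m] [Semiring R]

theorem list_sum_single_one_apply (L : List (m × m)) (i j : m) :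
    (L.map fun p => single p.1 p.2 (1 : R)).sum i j = L.count (i, j) := by
  induction L with
  | nil => simp
  | cons p L ih =>
    rw [List.map_cons, List.sum_cons, add_apply, ih, List.count_cons, single_apply]
    push_cast [beq_iff_eq, Prod.ext_iff]
    exact add_comm _ _

theorem list_prod_one_add_single_of_snd_ne_fst [Fintype m] (L : List (m × m))
    (h : ∀ p ∈ L, ∀ q ∈ L, p.2 ≠ q.1) :
    (L.map fun p => 1 + single p.1 p.2 (1 : R)).prod =
      1 + (L.map fun p => single p.1 p.2 (1 : R)).sum := by
  rw [← List.prod_map_one_add_of_mul_eq_zero, List.map_map]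
  · rfl
  simp only [List.mem_map]
  rintro _ ⟨p, hp, rfl⟩ _ ⟨q, hq, rfl⟩
  exact single_mul_single_of_ne _ _ _ _ (h p hp q hq) _

end Matrix

theorem product_commuting_elementary_matrices_general {n : ℕ}
    (L : List (Fin n × Fin n))
    (hne : ∀ p ∈ L, p.1 ≠ p.2)
    (hct : ∀ p ∈ L, ∀ q ∈ L, p.2 ≠ q.1)
    (G : Matrix (Fin n) (Fin n) (ZMod 2))
    (hG : G = (L.map fun p => B p.1 p.2).prod) :
    (∀ i, G i i = 1) ∧
      (∀ i j, i ≠ j → G i j = 1 → ∀ k, k ≠ j → G j k = 0) := by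
  have hentry : ∀ i j, G i j = (1 : Matrix (Fin n) (Fin n) (ZMod 2)) i j + L.count (i, j) := by
    intro i j
    rw [hG, ← list_sum_single_one_apply, ← Matrix.add_apply,
      ← list_prod_one_add_single_of_snd_ne_fst L hct]
    rfl
  refine ⟨fun i => ?_, fun i j hij hGij k hkj => ?_⟩
  · have hiiL : (i, i) ∉ L := fun hii => hne _ hii rfl
    rw [hentry, one_apply_eq, List.count_eq_zero.2 hiiL, Nat.cast_zero, add_zero]
  · have hijL : (i, j) ∈ L := by
      rw [hentry, one_apply_ne hij, zero_add] at hGij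
      refine List.count_pos_iff.1 (Nat.pos_of_ne_zero fun h0 => ?_)
      simp [h0] at hGij
    have hjkL : (j, k) ∉ L := fun hjk => hct _ hijL _ hjk rfl
    rw [hentry, one_apply_ne hkj.symm, List.count_eq_zero.2 hjkL, Nat.cast_zero, add_zero]

theorem product_commuting_elementary_matrices {n : ℕ}
    (L : List (Fin n × Fin n))
    (hne : ∀ p ∈ L, p.1 ≠ p.2)
    (hcomm : L.Pairwise fun p q => B p.1 p.2 * B q.1 q.2 = B q.1 q.2 * B p.1 p.2)
    (hdist : L.Pairwise (· ≠ ·))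
    (hct : ∀ p ∈ L, ∀ q ∈ L, p.2 ≠ q.1)
    (G : Matrix (Fin n) (Fin n) (ZMod 2))
    (hG : G = (L.map fun p => B p.1 p.2).prod) :
    (∀ i, G i i = 1) ∧
      (∀ i j, i ≠ j → G i j = 1 → ∀ k, k ≠ j → G j k = 0) :=
  product_commuting_elementary_matrices_general L hne hct G hG
end
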